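/- Under the closed-loop stability setup, for every θ ∈ Θ and every differentiable trajectory x : [0,∞) → ℝⁿ satisfying x′(t) = Σ_{k=1}^K h_k(θ) · (F_k(x(t)) + G_k(x(t)) Z(x(t)) W) · z(x(t)) for all t ≥ 0, the trajectory converges to the origin: x(t) → 0 as t → ∞. -/

import Mathlib

/-
`V x = z(x)ᵀ (P + Pᵀ) z(x)` is a common Lyapunov function for all vertices of the polytopic
closed loop. Along a trajectory, `V̇ = 2 zᵀ (P + Pᵀ) Dz ẋ = -4 ∑ₖ hₖ(θ) ξᵀ Tₖ ξ` by the
hypothesis on `Uₖ`; since the weights are nonnegative and sum to one, this rate is negative away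
from the origin. `V` is radially unbounded because `z` is, so the trajectory stays in a compact
sublevel set of `V`; on it the continuous decay rate is bounded below away from the origin,
which forces `V (x t) → 0` and hence `x t → 0`.
-/

open Matrix Filter Topology Set

noncomputable section

def Umat {n m d dZ : ℕ} (Dz : (Fin n → ℝ) → Matrix (Fin d) (Fin n) ℝ)
    (F : (Fin n → ℝ) → Matrix (Fin n) (Fin d) ℝ)
    (G : (Fin n → ℝ) → Matrix (Fin n) (Fin m) ℝ)
    (Z : (Fin n → ℝ) → Matrix (Fin m) (Fin dZ) ℝ)
    (x : Fin n → ℝ) (P : Matrix (Fin d) (Fin d) ℝ) (W : Matrix (Fin dZ) (Fin d) ℝ) :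
    Matrix (Fin d) (Fin d) ℝ :=
  -(((1 : ℝ) / 2) • (P + Pᵀ)) * (Dz x * (F x + G x * Z x * W))

theorem isCompact_setOf_le_of_tendsto_cocompact {X : Type*} [TopologicalSpace X] {V : X → ℝ}
    (hV : Continuous V) (hlim : Tendsto V (cocompact X) atTop) (c : ℝ) :
    IsCompact {y | V y ≤ c} := by
  obtain ⟨K, hK, hKc⟩ := mem_cocompact.mp (hlim.eventually_gt_atTop c)
  exact hK.of_isClosed_subset (isClosed_le hV continuous_const) fun y hy =>
    by_contra fun hyK => not_lt.mpr (show V y ≤ c from hy) (hKc hyK)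

theorem sub_le_mul_sub_of_hasDerivAt_le {f f' : ℝ → ℝ} {C : ℝ}
    (hf : ∀ t, 0 ≤ t → HasDerivAt f (f' t) t) (hf' : ∀ t, 0 ≤ t → f' t ≤ C)
    {s t : ℝ} (hs : 0 ≤ s) (hst : s ≤ t) : f t - f s ≤ C * (t - s) := by
  have hIci : ∀ t ∈ interior (Ici (0 : ℝ)), 0 ≤ t := fun t ht => interior_subset ht
  exact (convex_Ici 0).image_sub_le_mul_sub_of_deriv_le
    (fun t ht => (hf t ht).continuousAt.continuousWithinAt)
    (fun t ht => (hf t (hIci t ht)).differentiableAt.differentiableWithinAt)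
    (fun t ht => (hf t (hIci t ht)).deriv ▸ hf' t (hIci t ht)) s hs t (hs.trans hst) hst

theorem HasDerivAt.dotProduct {ι : Type*} [Fintype ι] {y w : ℝ → ι → ℝ} {y' w' : ι → ℝ} {t : ℝ}
    (hy : HasDerivAt y y' t) (hw : HasDerivAt w w' t) :
    HasDerivAt (fun s => y s ⬝ᵥ w s) (y' ⬝ᵥ w t + y t ⬝ᵥ w') t := by
  have h := HasDerivAt.fun_sum (u := Finset.univ)
    fun i _ => (hasDerivAt_pi.mp hy i).fun_mul (hasDerivAt_pi.mp hw i)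
  simpa only [_root_.dotProduct, Finset.sum_add_distrib] using h

theorem HasDerivAt.matrix_mulVec {ι κ : Type*} [Fintype κ] (Q : Matrix ι κ ℝ) {y : ℝ → κ → ℝ}
    {y' : κ → ℝ} {t : ℝ} (hy : HasDerivAt y y' t) :
    HasDerivAt (fun s => Q *ᵥ y s) (Q *ᵥ y') t :=
  hasDerivAt_pi.mpr fun i => by
    simpa [mulVec] using (hasDerivAt_const t (Q i)).dotProduct hy

theorem HasDerivAt.dotProduct_mulVec_self {ι : Type*} [Fintype ι] {Q : Matrix ι ι ℝ}
    (hQ : Q.IsSymm) {y : ℝ → ι → ℝ} {y' : ι → ℝ} {t : ℝ} (hy : HasDerivAt y y' t) :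
    HasDerivAt (fun s => y s ⬝ᵥ (Q *ᵥ y s)) (2 * (y t ⬝ᵥ (Q *ᵥ y'))) t := by
  convert hy.dotProduct (hy.matrix_mulVec Q) using 1
  rw [dotProduct_comm, ← vecMul_transpose, hQ.eq, ← dotProduct_mulVec]
  ring

theorem Matrix.PosDef.exists_mul_norm_sq_le_dotProduct_mulVec {ι : Type*} [Fintype ι]
    {Q : Matrix ι ι ℝ} (hQ : Q.PosDef) :
    ∃ c > 0, ∀ v : ι → ℝ, c * ‖v‖ ^ 2 ≤ v ⬝ᵥ (Q *ᵥ v) := by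
  rcases isEmpty_or_nonempty ι with hι | hι
  · exact ⟨1, one_pos, fun v => by simp [Subsingleton.elim v 0]⟩
  have hcont : Continuous fun v : ι → ℝ => v ⬝ᵥ (Q *ᵥ v) := by fun_prop
  obtain ⟨v₀, hv₀, hmin⟩ := (isCompact_sphere (0 : ι → ℝ) 1).exists_isMinOn
    (NormedSpace.sphere_nonempty.mpr zero_le_one) hcont.continuousOn
  have hv₀ne : v₀ ≠ 0 := ne_zero_of_mem_unit_sphere ⟨v₀, hv₀⟩
  refine ⟨_, hQ.dotProduct_mulVec_pos hv₀ne, fun v => ?_⟩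
  rcases eq_or_ne v 0 with rfl | hv
  · simp
  have hnv : ‖v‖ ≠ 0 := norm_ne_zero_iff.mpr hv
  have hu : ‖v‖⁻¹ • v ∈ Metric.sphere (0 : ι → ℝ) 1 := by
    simp [norm_smul, hnv]
  have hscal : v ⬝ᵥ (Q *ᵥ v) = ‖v‖ ^ 2 * ((‖v‖⁻¹ • v) ⬝ᵥ (Q *ᵥ (‖v‖⁻¹ • v))) := by
    simp only [mulVec_smul, dotProduct_smul, smul_dotProduct, smul_eq_mul]
    field_simp
  rw [hscal, mul_comm]
  exact mul_le_mul_of_nonneg_left (hmin hu) (sq_nonneg _)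

theorem Filter.Tendsto.dotProduct_mulVec_atTop {X ι : Type*} [Fintype ι] {l : Filter X}
    {Q : Matrix ι ι ℝ} (hQ : Q.PosDef) {z : X → ι → ℝ}
    (hz : Tendsto (fun x => ‖z x‖) l atTop) :
    Tendsto (fun x => z x ⬝ᵥ (Q *ᵥ z x)) l atTop := by
  obtain ⟨c, hc, hcQ⟩ := hQ.exists_mul_norm_sq_le_dotProduct_mulVec
  exact tendsto_atTop_mono (fun x => hcQ (z x))
    (((tendsto_pow_atTop two_ne_zero).comp hz).const_mul_atTop hc)

section Lyapunov

variable {E : Type*} [NormedAddCommGroup E] {V D : E → ℝ}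

theorem tendsto_zero_of_tendsto_comp_of_isCompact {α : Type*} {l : Filter α} {x : α → E}
    (hVc : Continuous V) (hVpos : ∀ y, y ≠ 0 → 0 < V y) {K : Set E} (hK : IsCompact K)
    (hxK : ∀ᶠ t in l, x t ∈ K) (hV : Tendsto (fun t => V (x t)) l (𝓝 0)) :
    Tendsto x l (𝓝 0) := by
  rw [NormedAddGroup.tendsto_nhds_zero]
  intro ε hε
  set S := K ∩ {y | ε ≤ ‖y‖}
  rcases S.eq_empty_or_nonempty with hS | hS
  · filter_upwards [hxK] with t ht
    by_contra! hge
    exact hS.subset ⟨ht, hge⟩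
  obtain ⟨y₀, hy₀, hmin⟩ := (hK.inter_right (isClosed_le continuous_const continuous_norm)).exists_isMinOn
    hS hVc.continuousOn
  have hy₀ne : y₀ ≠ 0 := by
    rintro rfl
    exact hε.not_ge (by simpa using hy₀.2)
  filter_upwards [hxK, hV.eventually (gt_mem_nhds (hVpos y₀ hy₀ne))] with t htK htV
  by_contra! hge
  exact (hmin ⟨htK, hge⟩).not_gt htV

theorem exists_lt_of_hasDerivAt_le_neg {x : ℝ → E} {v' : ℝ → ℝ} (hV0 : V 0 = 0)
    (hVnonneg : ∀ y, 0 ≤ V y) (hVc : Continuous V) (hDc : Continuous D)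
    (hDpos : ∀ y, y ≠ 0 → 0 < D y) {K : Set E} (hK : IsCompact K) (hxK : ∀ t, 0 ≤ t → x t ∈ K)
    (hv : ∀ t, 0 ≤ t → HasDerivAt (fun s => V (x s)) (v' t) t)
    (hv' : ∀ t, 0 ≤ t → v' t ≤ -D (x t)) {ε : ℝ} (hε : 0 < ε) :
    ∃ t, 0 ≤ t ∧ V (x t) < ε := by
  by_contra! hge
  obtain ⟨y₀, hy₀, hmin⟩ := (hK.inter_right (isClosed_le continuous_const hVc)).exists_isMinOn
    ⟨x 0, hxK 0 le_rfl, hge 0 le_rfl⟩ hDc.continuousOn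
  have hy₀ne : y₀ ≠ 0 := by
    rintro rfl
    exact hε.not_ge (hV0 ▸ hy₀.2)
  have hδ : 0 < D y₀ := hDpos y₀ hy₀ne
  -- `D ≥ D y₀ > 0` along the whole trajectory, so `V (x t)` would fall linearly below zero
  have htime : 0 ≤ V (x 0) / D y₀ + 1 := add_nonneg (div_nonneg (hVnonneg _) hδ.le) zero_le_one
  have hdecay := sub_le_mul_sub_of_hasDerivAt_le hv
    (fun t ht => (hv' t ht).trans (neg_le_neg (hmin ⟨hxK t ht, hge t ht⟩))) le_rfl htime
  have hcancel : D y₀ * (V (x 0) / D y₀) = V (x 0) := mul_div_cancel₀ _ hδ.ne'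
  have := hVnonneg (x (V (x 0) / D y₀ + 1))
  linarith

theorem tendsto_zero_of_hasDerivAt_le_neg {x : ℝ → E} {v' : ℝ → ℝ} (hVc : Continuous V)
    (hV0 : V 0 = 0) (hVpos : ∀ y, y ≠ 0 → 0 < V y) (hVinf : Tendsto V (cocompact E) atTop)
    (hDc : Continuous D) (hD : ∀ y, 0 ≤ D y) (hDpos : ∀ y, y ≠ 0 → 0 < D y)
    (hv : ∀ t, 0 ≤ t → HasDerivAt (fun s => V (x s)) (v' t) t)
    (hv' : ∀ t, 0 ≤ t → v' t ≤ -D (x t)) :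
    Tendsto x atTop (𝓝 0) := by
  have hVnonneg (y : E) : 0 ≤ V y := by
    rcases eq_or_ne y 0 with rfl | hy
    exacts [hV0.ge, (hVpos y hy).le]
  have hanti {s t : ℝ} (hs : 0 ≤ s) (hst : s ≤ t) : V (x t) ≤ V (x s) := by
    have := sub_le_mul_sub_of_hasDerivAt_le hv
      (fun t ht => (hv' t ht).trans (neg_nonpos.mpr (hD _))) hs hst
    linarith
  set K := {y | V y ≤ V (x 0)}
  have hK : IsCompact K := isCompact_setOf_le_of_tendsto_cocompact hVc hVinf _
  have hxK (t : ℝ) (ht : 0 ≤ t) : x t ∈ K := hanti le_rfl ht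
  refine tendsto_zero_of_tendsto_comp_of_isCompact hVc hVpos hK
    ((eventually_ge_atTop 0).mono hxK) (tendsto_order.mpr ⟨fun a ha => ?_, fun ε hε => ?_⟩)
  · exact Eventually.of_forall fun t => ha.trans_le (hVnonneg _)
  · obtain ⟨t₀, ht₀, hlt⟩ :=
      exists_lt_of_hasDerivAt_le_neg hV0 hVnonneg hVc hDc hDpos hK hxK hv hv' hε
    filter_upwards [eventually_ge_atTop t₀] with t ht using (hanti ht₀ ht).trans_lt hlt

end Lyapunov

theorem dotProduct_mulVec_closedLoop_eq_sum_Umat {n m d dZ K : ℕ}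
    (Dz : (Fin n → ℝ) → Matrix (Fin d) (Fin n) ℝ)
    (F : Fin K → (Fin n → ℝ) → Matrix (Fin n) (Fin d) ℝ)
    (G : Fin K → (Fin n → ℝ) → Matrix (Fin n) (Fin m) ℝ)
    (Z : (Fin n → ℝ) → Matrix (Fin m) (Fin dZ) ℝ) (x : Fin n → ℝ)
    (P : Matrix (Fin d) (Fin d) ℝ) (W : Matrix (Fin dZ) (Fin d) ℝ) (c : Fin K → ℝ)
    (v : Fin d → ℝ) :
    v ⬝ᵥ ((P + Pᵀ) *ᵥ (Dz x *ᵥ ((∑ k, c k • (F k x + G k x * Z x * W)) *ᵥ v))) =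
      -2 * ∑ k, c k * (v ⬝ᵥ (Umat Dz (F k) (G k) Z x P W *ᵥ v)) := by
  simp only [Umat, sum_mulVec, mulVec_sum, smul_mulVec, mulVec_smul, mulVec_mulVec,
    Matrix.mul_assoc, Matrix.neg_mul, Matrix.smul_mul, neg_mulVec, dotProduct_sum,
    dotProduct_smul, dotProduct_neg, smul_eq_mul, Finset.mul_sum]
  exact Finset.sum_congr rfl fun k _ => by ring

theorem robust_global_asymptotic_stability_general
    {n m d dξ dZ K : ℕ}
    (z : (Fin n → ℝ) → Fin d → ℝ)
    (Dz : (Fin n → ℝ) → Matrix (Fin d) (Fin n) ℝ)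
    (hzdiff : ∀ x, HasFDerivAt z (LinearMap.toContinuousLinearMap (Dz x).mulVecLin) x)
    (hz0 : ∀ x, z x = 0 ↔ x = 0)
    (hzinf : Tendsto (fun x => ‖z x‖) (cocompact (Fin n → ℝ)) atTop)
    (ξ : (Fin n → ℝ) → Fin dξ → ℝ)
    (hξcont : Continuous ξ)
    (hξ0 : ∀ x, ξ x = 0 ↔ x = 0)
    (F : Fin K → (Fin n → ℝ) → Matrix (Fin n) (Fin d) ℝ)
    (G : Fin K → (Fin n → ℝ) → Matrix (Fin n) (Fin m) ℝ)
    (Z : (Fin n → ℝ) → Matrix (Fin m) (Fin dZ) ℝ)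
    (Θ : Type*) (h : Fin K → Θ → ℝ)
    (hh01 : ∀ k θ, h k θ ∈ Set.Icc (0 : ℝ) 1)
    (hsum : ∀ θ : Θ, ∑ k, h k θ = 1)
    (W : Matrix (Fin dZ) (Fin d) ℝ)
    (P : Matrix (Fin d) (Fin d) ℝ)
    (hP : (P + Pᵀ).PosDef)
    (T : Fin K → Matrix (Fin dξ) (Fin dξ) ℝ)
    (hT : ∀ k, (T k).PosDef)
    (hUT : ∀ (x : Fin n → ℝ) (k : Fin K),
      z x ⬝ᵥ (Umat Dz (F k) (G k) Z x P W *ᵥ z x) = ξ x ⬝ᵥ (T k *ᵥ ξ x)) :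
    ∀ (θ : Θ) (x : ℝ → Fin n → ℝ),
      (∀ t : ℝ, 0 ≤ t → HasDerivAt x
        ((∑ k, h k θ • (F k (x t) + G k (x t) * Z (x t) * W)) *ᵥ z (x t)) t) →
      Tendsto x atTop (𝓝 0) := by
  intro θ x hx
  have hzc : Continuous z := continuous_iff_continuousAt.mpr fun y => (hzdiff y).continuousAt
  have hTnonneg (k : Fin K) (y : Fin n → ℝ) : 0 ≤ ξ y ⬝ᵥ (T k *ᵥ ξ y) :=
    (hT k).posSemidef.dotProduct_mulVec_nonneg _
  let D (y : Fin n → ℝ) : ℝ := 4 * ∑ k, h k θ * (ξ y ⬝ᵥ (T k *ᵥ ξ y))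
  have hDnonneg (y : Fin n → ℝ) : 0 ≤ D y :=
    mul_nonneg zero_le_four (Finset.sum_nonneg fun k _ => mul_nonneg (hh01 k θ).1 (hTnonneg k y))
  obtain ⟨k₀, -, hk₀⟩ : ∃ k ∈ Finset.univ, 0 < h k θ :=
    Finset.exists_lt_of_sum_lt (by simp [hsum θ])
  have hDpos (y : Fin n → ℝ) (hy : y ≠ 0) : 0 < D y :=
    mul_pos four_pos <| Finset.sum_pos' (fun k _ => mul_nonneg (hh01 k θ).1 (hTnonneg k y))
      ⟨k₀, Finset.mem_univ _, mul_pos hk₀ ((hT k₀).dotProduct_mulVec_pos ((hξ0 y).not.mpr hy))⟩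
  have hderiv (t : ℝ) (ht : 0 ≤ t) :
      HasDerivAt (fun s => z (x s) ⬝ᵥ ((P + Pᵀ) *ᵥ z (x s))) (-D (x t)) t := by
    refine (((hzdiff (x t)).comp_hasDerivAt t (hx t ht)).dotProduct_mulVec_self
      (isSymm_add_transpose_self P)).congr_deriv ?_
    simp only [D, LinearMap.coe_toContinuousLinearMap', mulVecLin_apply, Function.comp_apply,
      dotProduct_mulVec_closedLoop_eq_sum_Umat, hUT]
    ring
  exact tendsto_zero_of_hasDerivAt_le_neg (by fun_prop) (by simp [(hz0 0).mpr rfl])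
    (fun y hy => hP.dotProduct_mulVec_pos ((hz0 y).not.mpr hy)) (hzinf.dotProduct_mulVec_atTop hP)
    (by fun_prop) hDnonneg hDpos hderiv fun t _ => le_rfl

/-- Under the closed-loop stability setup, every trajectory of the
polytopic closed-loop system converges to the origin, for every value of the uncertain
parameter `θ`. -/
theorem robust_global_asymptotic_stability
    {n m d dξ dZ K : ℕ}
    (hn : 0 < n) (hm : 0 < m) (hd : 0 < d) (hdξ : 0 < dξ) (hdZ : 0 < dZ) (hK : 0 < K)
    (z : (Fin n → ℝ) → Fin d → ℝ)
    (Dz : (Fin n → ℝ) → Matrix (Fin d) (Fin n) ℝ)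
    (hzdiff : ∀ x, HasFDerivAt z (LinearMap.toContinuousLinearMap (Dz x).mulVecLin) x)
    (hDzcont : Continuous Dz)
    (hz0 : ∀ x, z x = 0 ↔ x = 0)
    (hzinf : Tendsto (fun x => ‖z x‖) (cocompact (Fin n → ℝ)) atTop)
    (ξ : (Fin n → ℝ) → Fin dξ → ℝ)
    (hξcont : Continuous ξ)
    (hξ0 : ∀ x, ξ x = 0 ↔ x = 0)
    (hξinf : Tendsto (fun x => ‖ξ x‖) (cocompact (Fin n → ℝ)) atTop)
    (F : Fin K → (Fin n → ℝ) → Matrix (Fin n) (Fin d) ℝ)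
    (G : Fin K → (Fin n → ℝ) → Matrix (Fin n) (Fin m) ℝ)
    (Z : (Fin n → ℝ) → Matrix (Fin m) (Fin dZ) ℝ)
    (hFcont : ∀ k, Continuous (F k)) (hGcont : ∀ k, Continuous (G k))
    (hZcont : Continuous Z)
    (Θ : Type*) (h : Fin K → Θ → ℝ)
    (hh01 : ∀ k θ, h k θ ∈ Set.Icc (0 : ℝ) 1)
    (hsum : ∀ θ : Θ, ∑ k, h k θ = 1)
    (W : Matrix (Fin dZ) (Fin d) ℝ)
    (P : Matrix (Fin d) (Fin d) ℝ)
    (hP : (P + Pᵀ).PosDef)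
    (T : Fin K → Matrix (Fin dξ) (Fin dξ) ℝ)
    (hT : ∀ k, (T k).PosDef)
    (hUT : ∀ (x : Fin n → ℝ) (k : Fin K),
      z x ⬝ᵥ (Umat Dz (F k) (G k) Z x P W *ᵥ z x) = ξ x ⬝ᵥ (T k *ᵥ ξ x)) :
    ∀ (θ : Θ) (x : ℝ → Fin n → ℝ),
      (∀ t : ℝ, 0 ≤ t → HasDerivAt x
        ((∑ k, h k θ • (F k (x t) + G k (x t) * Z (x t) * W)) *ᵥ z (x t)) t) →
      Tendsto x atTop (𝓝 0) :=
  robust_global_asymptotic_stability_general z Dz hzdiff hz0 hzinf ξ hξcont hξ0 F G Z Θ h hh01 hsum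
    W P hP T hT hUT
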